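/- arXiv:1511.02747 — 3 statements merged into one kernel-verified Lean document; each statement's English description precedes it below -/
import Mathlib

section
/- The point (1,1,1) is not the sum of two lattice points of the tetrahedron P with vertices (0,0,0), (1,0,0), (0,1,0), (1,1,2); i.e., there do not exist x, y ∈ P ∩ ℤ³ with x + y = (1,1,1). -/
/-! The facets of `P` are `z ≥ 0`, `z ≤ 2x`, `z ≤ 2y` and `2x + 2y - z ≤ 2`. A lattice point at
height `z = 1` would need `x, y ≥ 1` from the middle two, contradicting the last; so the heights
of two lattice points of `P` are nonnegative integers different from `1`, and cannot sum to `1`. -/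

open MeasureTheory Pointwise

/-- The lattice points of `ℝ^n`: points with all coordinates integers. -/
def latticePts (n : ℕ) : Set (Fin n → ℝ) :=
  {x | ∀ i, ∃ z : ℤ, x i = (z : ℝ)}

/-- The `h`-fold sumset of `X ⊆ ℝ^n`. -/
def sumset (n h : ℕ) (X : Set (Fin n → ℝ)) : Set (Fin n → ℝ) :=
  {y | ∃ f : Fin h → (Fin n → ℝ), (∀ i, f i ∈ X) ∧ y = ∑ i, f i}

/-- The dilation `h ∗ X = {h • x : x ∈ X}`. -/
def dilate (n h : ℕ) (X : Set (Fin n → ℝ)) : Set (Fin n → ℝ) :=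
  {y | ∃ x ∈ X, y = (h : ℝ) • x}

/-- `P` is a lattice polytope in `ℝ^n`: the convex hull of a nonempty finite set of
lattice points. -/
def IsLatticePolytope (n : ℕ) (P : Set (Fin n → ℝ)) : Prop :=
  ∃ S : Finset (Fin n → ℝ), S.Nonempty ∧ ↑S ⊆ latticePts n ∧ P = convexHull ℝ (S : Set (Fin n → ℝ))

lemma LinearMap.le_of_mem_convexHull {E : Type*} [AddCommGroup E] [Module ℝ E] (f : E →ₗ[ℝ] ℝ)
    {s : Set E} {c : ℝ} (hs : ∀ v ∈ s, f v ≤ c) {p : E} (hp : p ∈ convexHull ℝ s) : f p ≤ c :=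
  convexHull_min hs (convex_halfSpace_le f.isLinear c) hp

abbrev tetrahedron : Set (Fin 3 → ℝ) :=
  convexHull ℝ {![0,0,0], ![1,0,0], ![0,1,0], ![1,1,2]}

lemma tetrahedron_facets {p : Fin 3 → ℝ} (hp : p ∈ tetrahedron) :
    0 ≤ p 2 ∧ p 2 ≤ 2 * p 0 ∧ p 2 ≤ 2 * p 1 ∧ 2 * p 0 + 2 * p 1 - p 2 ≤ 2 := by
  let π (i : Fin 3) : (Fin 3 → ℝ) →ₗ[ℝ] ℝ := LinearMap.proj i
  have facet (f : (Fin 3 → ℝ) →ₗ[ℝ] ℝ) (c : ℝ)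
      (hf : f ![0,0,0] ≤ c ∧ f ![1,0,0] ≤ c ∧ f ![0,1,0] ≤ c ∧ f ![1,1,2] ≤ c) : f p ≤ c := by
    refine f.le_of_mem_convexHull (fun v hv => ?_) hp
    simp only [Set.mem_insert_iff, Set.mem_singleton_iff] at hv
    rcases hv with rfl | rfl | rfl | rfl <;> simp only [hf]
  have h₁ := facet (-π 2) 0 (by simp [π])
  have h₂ := facet (π 2 - 2 • π 0) 0 (by simp [π])
  have h₃ := facet (π 2 - 2 • π 1) 0 (by simp [π])
  have h₄ := facet (2 • π 0 + 2 • π 1 - π 2) 2 (by simp [π])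
  simp only [π, LinearMap.neg_apply, LinearMap.sub_apply, LinearMap.add_apply,
    LinearMap.smul_apply, LinearMap.coe_proj, Function.eval, nsmul_eq_mul,
    Nat.cast_ofNat] at h₁ h₂ h₃ h₄
  exact ⟨by linarith, by linarith, by linarith, by linarith⟩

lemma tetrahedron_lattice_height {p : Fin 3 → ℝ} (hp : p ∈ tetrahedron) (hpℤ : p ∈ latticePts 3) :
    ∃ k : ℤ, p 2 = k ∧ 0 ≤ k ∧ k ≠ 1 := by
  obtain ⟨h₀, h₁, h₂, h₃⟩ := tetrahedron_facets hp
  obtain ⟨a, ha⟩ := hpℤ 0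
  obtain ⟨b, hb⟩ := hpℤ 1
  obtain ⟨k, hk⟩ := hpℤ 2
  simp only [ha, hb, hk] at h₀ h₁ h₂ h₃
  have : (0 : ℤ) ≤ k := by exact_mod_cast h₀
  have : k ≤ 2 * a := by exact_mod_cast h₁
  have : k ≤ 2 * b := by exact_mod_cast h₂
  have : 2 * a + 2 * b - k ≤ 2 := by exact_mod_cast h₃
  exact ⟨k, hk, by omega, by omega⟩

theorem tetrahedron_no_rep :
    let P : Set (Fin 3 → ℝ) := convexHull ℝ {![0,0,0], ![1,0,0], ![0,1,0], ![1,1,2]}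
    ¬ ∃ x y : Fin 3 → ℝ, x ∈ P ∩ latticePts 3 ∧ y ∈ P ∩ latticePts 3 ∧
      x + y = ![1,1,1] := by
  rintro P ⟨x, y, ⟨hxP, hxℤ⟩, ⟨hyP, hyℤ⟩, hsum⟩
  obtain ⟨a, ha, ha₀, ha₁⟩ := tetrahedron_lattice_height hxP hxℤ
  obtain ⟨b, hb, hb₀, hb₁⟩ := tetrahedron_lattice_height hyP hyℤ
  have hab : (a + b : ℝ) = 1 := by simpa [ha, hb] using congrFun hsum 2
  have : a + b = 1 := by exact_mod_cast hab
  omega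
end

section
/- A lattice triangle in ℝ² is primitive (contains no lattice points other than its three vertices) if and only if its area is 1/2. -/
open MeasureTheory Pointwise

/-!
Write the triangle as `a + M Δ`, where `Δ = conv {0, e₀, e₁}` is the unit triangle and `M` is
the integer matrix with columns `b - a` and `c - a`. Its area is `|det M| / 2`, and it is primitive
exactly when every `p ∈ Δ` with `M p ∈ ℤ²` lies in `ℤ²`. Reducing `p` modulo `ℤ²` lands in the
unit square, which is covered by `Δ` and its reflection through `(1/2, 1/2)`; so the restriction
`p ∈ Δ` can be dropped, and primitivity says `M⁻¹ ℤ² ⊆ ℤ²`, i.e. `M⁻¹` is an integer matrix,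
i.e. `det M = ±1`.
-/

open Matrix

def intLattice (ι : Type*) : AddSubgroup (ι → ℝ) :=
  ((Int.castAddHom ℝ).compLeft ι).range

section intLattice

variable {ι m n : Type*}

theorem mem_intLattice {p : ι → ℝ} : p ∈ intLattice ι ↔ ∃ P : ι → ℤ, (fun i => (P i : ℝ)) = p :=
  Iff.rfl

theorem coe_intLattice (n : ℕ) : (intLattice (Fin n) : Set (Fin n → ℝ)) = latticePts n := by
  ext p
  simp only [SetLike.mem_coe, mem_intLattice, latticePts, Set.mem_ofPred_eq, funext_iff,
    eq_comm (b := p _)]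
  exact (Classical.skolem (p := fun i (z : ℤ) => p i = z)).symm

theorem exists_map_intCast_eq {M : Matrix m n ℝ} (h : ∀ j, M.col j ∈ intLattice m) :
    ∃ N : Matrix m n ℤ, N.map (↑) = M := by
  choose K hK using h
  exact ⟨(of K)ᵀ, by ext i j; simpa using congrFun (hK j) i⟩

theorem mulVec_mem_intLattice [Fintype n] (N : Matrix m n ℤ) {p : n → ℝ}
    (hp : p ∈ intLattice n) : N.map (↑) *ᵥ p ∈ intLattice m := by
  obtain ⟨P, rfl⟩ := hp
  exact ⟨N *ᵥ P, funext fun i => by simp [mulVec, dotProduct]⟩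

variable [Fintype ι] [DecidableEq ι]

theorem isUnit_det_iff_mulVec_preimage_subset (N : Matrix ι ι ℤ) (hN : N.det ≠ 0) :
    IsUnit N.det ↔ (N.map ((↑) : ℤ → ℝ)).mulVec ⁻¹' intLattice ι ⊆ intLattice ι := by
  set M : Matrix ι ι ℝ := N.map (↑)
  have hM : IsUnit M.det := by
    rw [← Int.cast_det, isUnit_iff_ne_zero]
    exact_mod_cast hN
  constructor
  · intro hunit p hp
    have : N⁻¹.map (↑) *ᵥ (M *ᵥ p) = p := by
      rw [mulVec_mulVec, ← map_mul_intCast, nonsing_inv_mul N hunit,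
        Matrix.map_one _ Int.cast_zero Int.cast_one, one_mulVec]
    exact this ▸ mulVec_mem_intLattice N⁻¹ hp
  · intro h
    obtain ⟨K, hK⟩ := exists_map_intCast_eq (M := M⁻¹) fun j => h <| by
      rw [← mulVec_single_one, Set.mem_preimage, mulVec_mulVec, mul_nonsing_inv M hM,
        one_mulVec]
      exact ⟨Pi.single j 1, by ext i; simp [Pi.single_apply]⟩
    refine isUnit_det_of_right_inverse (B := K) (map_injective (Int.cast_injective (α := ℝ)) ?_)
    dsimp only
    rw [map_mul_intCast, hK, Matrix.map_one _ Int.cast_zero Int.cast_one]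
    exact mul_nonsing_inv M hM

theorem vadd_image_inter_intLattice_eq_iff (N : Matrix ι ι ℤ) (hN : N.det ≠ 0) {a : ι → ℝ}
    (ha : a ∈ intLattice ι) (S : Set (ι → ℝ)) :
    (a +ᵥ (N.map ((↑) : ℤ → ℝ)).mulVec '' S) ∩ intLattice ι =
        a +ᵥ (N.map ((↑) : ℤ → ℝ)).mulVec '' (S ∩ intLattice ι) ↔
      S ∩ (N.map ((↑) : ℤ → ℝ)).mulVec ⁻¹' intLattice ι ⊆ intLattice ι := by
  set M : Matrix ι ι ℝ := N.map (↑)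
  set g : (ι → ℝ) → ι → ℝ := fun p => a + M *ᵥ p
  have hg : Function.Injective g := by
    refine (add_right_injective a).comp (mulVec_injective_iff_isUnit.mpr ?_)
    rw [isUnit_iff_isUnit_det, ← Int.cast_det, isUnit_iff_ne_zero]
    exact_mod_cast hN
  have himage (T : Set (ι → ℝ)) : a +ᵥ M.mulVec '' T = g '' T := by
    rw [← Set.image_vadd, Set.image_image]
    rfl
  have hpre : g ⁻¹' intLattice ι = M.mulVec ⁻¹' intLattice ι := by
    ext p
    simp [g, add_mem_cancel_left ha]
  rw [himage, himage, ← Set.image_inter_preimage, hg.image_injective.eq_iff, hpre]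
  refine ⟨fun h => h ▸ Set.inter_subset_right, fun h => ?_⟩
  exact (Set.subset_inter Set.inter_subset_left h).antisymm
    (Set.inter_subset_inter_right _ fun p hp => mulVec_mem_intLattice N hp)

end intLattice

def unitTriangle : Set (Fin 2 → ℝ) := {p | 0 ≤ p 0 ∧ 0 ≤ p 1 ∧ p 0 + p 1 ≤ 1}

theorem convexHull_unitTriangle_vertices :
    convexHull ℝ {0, Pi.single 0 1, Pi.single 1 1} = unitTriangle := by
  apply subset_antisymm
  · refine convexHull_min ?_ ?_
    · rintro p (rfl | rfl | rfl) <;> simp [unitTriangle]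
    · intro p ⟨hp0, hp1, hp⟩ q ⟨hq0, hq1, hq⟩ s t hs ht hst
      refine ⟨?_, ?_, ?_⟩ <;> simp only [Pi.add_apply, Pi.smul_apply, smul_eq_mul] <;> nlinarith
  · rintro p ⟨hp0, hp1, hp⟩
    let w : Fin 3 → ℝ := ![1 - p 0 - p 1, p 0, p 1]
    let z : Fin 3 → Fin 2 → ℝ := ![0, Pi.single 0 1, Pi.single 1 1]
    have hp : p = ∑ i, w i • z i := by
      ext i; fin_cases i <;> simp [w, z, Fin.sum_univ_three]
    rw [hp]
    refine (convex_convexHull ℝ _).sum_mem (fun i _ => ?_) ?_ (fun i _ => subset_convexHull ℝ _ ?_)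
    · fin_cases i <;> simp only [w, Fin.isValue, Fin.zero_eta, Fin.mk_one, Fin.reduceFinMk,
        cons_val_zero, cons_val_one, cons_val] <;> linarith
    · simp only [w, Fin.sum_univ_three, Fin.isValue, cons_val_zero, cons_val_one, cons_val]
      ring
    · fin_cases i <;> simp [z]

theorem volume_unitTriangle : volume unitTriangle = ENNReal.ofReal (1 / 2) := by
  let Δ : Set (ℝ × ℝ) := {p | 0 ≤ p.1 ∧ 0 ≤ p.2 ∧ p.1 + p.2 ≤ 1}
  have hΔ : MeasurableSet Δ :=
    (measurableSet_le measurable_const measurable_fst).inter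
      ((measurableSet_le measurable_const measurable_snd).inter
        (measurableSet_le (measurable_fst.add measurable_snd) measurable_const))
  have hslice : ∀ x, volume (Prod.mk x ⁻¹' Δ) = (Set.Icc (0 : ℝ) 1).indicator
      (fun x => ENNReal.ofReal (1 - x)) x := by
    intro x
    by_cases hx : x ∈ Set.Icc (0 : ℝ) 1
    · have : Prod.mk x ⁻¹' Δ = Set.Icc 0 (1 - x) := by
        ext y; simp only [Set.mem_preimage, Set.mem_Icc, Δ, Set.mem_ofPred_eq]; grind
      simp [this, Set.indicator_of_mem hx]
    · have : Prod.mk x ⁻¹' Δ = ∅ := by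
        ext y; simp only [Set.mem_preimage, Set.mem_Icc, Δ, Set.mem_ofPred_eq] at hx ⊢; grind
      simp [this, Set.indicator_of_notMem hx]
  have hint : ∫ x in (0 : ℝ)..1, (1 - x) = 1 / 2 := by
    rw [intervalIntegral.integral_sub intervalIntegrable_const
      intervalIntegral.intervalIntegrable_id, intervalIntegral.integral_const, integral_id]
    norm_num
  calc volume unitTriangle = volume Δ :=
        (volume_preserving_finTwoArrow ℝ).measure_preimage hΔ.nullMeasurableSet
    _ = ∫⁻ x in Set.Icc (0 : ℝ) 1, ENNReal.ofReal (1 - x) := by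
        rw [Measure.volume_eq_prod, Measure.prod_apply hΔ, funext hslice,
          lintegral_indicator measurableSet_Icc]
    _ = ENNReal.ofReal (1 / 2) := by
        rw [← ofReal_integral_eq_lintegral_ofReal, integral_Icc_eq_integral_Ioc,
          ← intervalIntegral.integral_of_le zero_le_one, hint]
        · exact (continuous_const.sub continuous_id).integrableOn_Icc
        · exact (ae_restrict_iff' measurableSet_Icc).2 (.of_forall fun x hx => by
            simpa using hx.2)

theorem unitTriangle_inter_intLattice :
    unitTriangle ∩ intLattice (Fin 2) = {0, Pi.single 0 1, Pi.single 1 1} := by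
  ext p
  constructor
  · rintro ⟨⟨h0, h1, h01⟩, hp⟩
    obtain ⟨P, rfl⟩ := mem_intLattice.mp hp
    beta_reduce at h0 h1 h01
    have h0 : 0 ≤ P 0 := by exact_mod_cast h0
    have h1 : 0 ≤ P 1 := by exact_mod_cast h1
    have h01 : P 0 + P 1 ≤ 1 := by exact_mod_cast h01
    have : (P 0 = 0 ∧ P 1 = 0) ∨ (P 0 = 1 ∧ P 1 = 0) ∨ (P 0 = 0 ∧ P 1 = 1) := by omega
    rcases this with ⟨e0, e1⟩ | ⟨e0, e1⟩ | ⟨e0, e1⟩ <;>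
      simp [funext_iff, Fin.forall_fin_two, e0, e1]
  · rintro (rfl | rfl | rfl)
    · exact ⟨by simp [unitTriangle], zero_mem _⟩
    · exact ⟨by simp [unitTriangle], Pi.single 0 1, by ext i; fin_cases i <;> simp⟩
    · exact ⟨by simp [unitTriangle], Pi.single 1 1, by ext i; fin_cases i <;> simp⟩

theorem unitTriangle_inter_mulVec_preimage_subset_iff (N : Matrix (Fin 2) (Fin 2) ℤ) :
    unitTriangle ∩ (N.map ((↑) : ℤ → ℝ)).mulVec ⁻¹' intLattice (Fin 2) ⊆ intLattice (Fin 2) ↔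
      (N.map ((↑) : ℤ → ℝ)).mulVec ⁻¹' intLattice (Fin 2) ⊆ intLattice (Fin 2) := by
  refine ⟨fun h p hpN => ?_, fun h => Set.inter_subset_right.trans h⟩
  by_contra hpΛ
  set M : Matrix (Fin 2) (Fin 2) ℝ := N.map (↑)
  set F : Fin 2 → ℝ := fun i => (⌊p i⌋ : ℝ)
  have hF : F ∈ intLattice (Fin 2) := ⟨_, rfl⟩
  set q := p - F with hq_def
  have hqΛ : q ∉ intLattice (Fin 2) := fun hq => hpΛ (by simpa [q] using add_mem hq hF)
  have hqN : M *ᵥ q ∈ intLattice (Fin 2) := by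
    rw [hq_def, mulVec_sub]
    exact sub_mem hpN (mulVec_mem_intLattice N hF)
  have hq0 (i) : 0 ≤ q i := Int.fract_nonneg (p i)
  have hq1 (i) : q i < 1 := Int.fract_lt_one (p i)
  by_cases hq : q 0 + q 1 ≤ 1
  · exact hqΛ (h ⟨⟨hq0 0, hq0 1, hq⟩, hqN⟩)
  · have hone : (1 : Fin 2 → ℝ) ∈ intLattice (Fin 2) := ⟨1, by ext; simp⟩
    have hr : 1 - q ∈ unitTriangle := by
      refine ⟨?_, ?_, ?_⟩ <;> simp only [Pi.sub_apply, Pi.one_apply] <;> linarith [hq1 0, hq1 1]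
    have hrN : M *ᵥ (1 - q) ∈ intLattice (Fin 2) := by
      rw [mulVec_sub]
      exact sub_mem (mulVec_mem_intLattice N hone) hqN
    exact hqΛ (by simpa using sub_mem hone (h ⟨hr, hrN⟩))

theorem vadd_image_unitTriangle_vertices (a u v : Fin 2 → ℝ) :
    a +ᵥ (of ![u, v])ᵀ.mulVec '' {0, Pi.single 0 1, Pi.single 1 1} = {a, a + u, a + v} := by
  simp only [Set.image_insert_eq, Set.image_singleton, Set.vadd_set_insert,
    Set.vadd_set_singleton, mulVec_zero, mulVec_single_one, vadd_eq_add, add_zero]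
  rfl

theorem convexHull_triangle_eq_vadd_image (a b c : Fin 2 → ℝ) :
    convexHull ℝ {a, b, c} = a +ᵥ (of ![b - a, c - a])ᵀ.mulVec '' unitTriangle := by
  rw [← convexHull_unitTriangle_vertices, ← coe_mulVecLin, LinearMap.image_convexHull,
    ← convexHull_vadd, coe_mulVecLin, vadd_image_unitTriangle_vertices, add_sub_cancel,
    add_sub_cancel]

theorem volume_vadd_image_unitTriangle (a : Fin 2 → ℝ) (M : Matrix (Fin 2) (Fin 2) ℝ) :
    volume (a +ᵥ M.mulVec '' unitTriangle) = ENNReal.ofReal (|M.det| / 2) := by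
  rw [measure_vadd, ← coe_mulVecLin, Measure.addHaar_image_linearMap, ← toLin'_apply',
    LinearMap.det_toLin', volume_unitTriangle, ← ENNReal.ofReal_mul (abs_nonneg _)]
  ring_nf

theorem det_ne_zero_of_not_collinear {a b c : Fin 2 → ℝ} (h : ¬Collinear ℝ {a, b, c}) :
    (of ![b - a, c - a]).det ≠ 0 := by
  contrapose! h
  have hdep : ¬LinearIndependent ℝ ![b - a, c - a] := by
    rw [show ![b - a, c - a] = (of ![b - a, c - a]).row from rfl,
      linearIndependent_rows_iff_isUnit, isUnit_iff_isUnit_det, h]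
    exact not_isUnit_zero
  simp only [linearIndependent_fin2, not_and_or, not_forall, not_not] at hdep
  rcases hdep with hca | ⟨r, hr⟩
  · obtain rfl : c = a := by simpa [sub_eq_zero] using hca
    simpa [Set.pair_comm] using collinear_pair ℝ c b
  · rw [collinear_iff_of_mem (Set.mem_insert a _)]
    refine ⟨c - a, ?_⟩
    rintro p (rfl | rfl | rfl)
    · exact ⟨0, by simp⟩
    · exact ⟨r, by rw [vadd_eq_add, show r • (c - a) = p - a from hr, sub_add_cancel]⟩
    · exact ⟨1, by simp⟩

theorem primitive_iff_area_half
    (a b c : Fin 2 → ℝ) (ha : a ∈ latticePts 2) (hb : b ∈ latticePts 2)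
    (hc : c ∈ latticePts 2) (hncol : ¬ Collinear ℝ ({a, b, c} : Set (Fin 2 → ℝ)))
    (T : Set (Fin 2 → ℝ)) (hT : T = convexHull ℝ {a, b, c}) :
    T ∩ latticePts 2 = {a, b, c} ↔ volume T = ENNReal.ofReal (1 / 2) := by
  rw [← coe_intLattice] at ha hb hc ⊢
  obtain ⟨N, hN⟩ : ∃ N : Matrix (Fin 2) (Fin 2) ℤ, N.map (↑) = (of ![b - a, c - a])ᵀ :=
    exists_map_intCast_eq fun j => by fin_cases j; exacts [sub_mem hb ha, sub_mem hc ha]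
  have hdet : N.det ≠ 0 := by
    have := det_ne_zero_of_not_collinear hncol
    rwa [← det_transpose, ← hN, ← Int.cast_det, Int.cast_ne_zero] at this
  have hvert : ({a, b, c} : Set (Fin 2 → ℝ)) =
      a +ᵥ (of ![b - a, c - a])ᵀ.mulVec '' (unitTriangle ∩ intLattice (Fin 2)) := by
    rw [unitTriangle_inter_intLattice, vadd_image_unitTriangle_vertices, add_sub_cancel,
      add_sub_cancel]
  rw [hT, convexHull_triangle_eq_vadd_image, volume_vadd_image_unitTriangle, hvert, ← hN,
    vadd_image_inter_intLattice_eq_iff N hdet ha, unitTriangle_inter_mulVec_preimage_subset_iff,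
    ← isUnit_det_iff_mulVec_preimage_subset N hdet, Int.isUnit_iff_abs_eq, ← Int.cast_det,
    ENNReal.ofReal_eq_ofReal_iff (by positivity) (by norm_num)]
  constructor <;> intro h
  · rw [← Int.cast_abs, h]; norm_num
  · exact_mod_cast (by linarith : |((N.det : ℤ) : ℝ)| = 1)
end

section
/- Let P be a lattice polygon in ℝ² and h a positive integer. If w is a lattice point in the h-fold sumset hP, then there exist lattice points a, b, c ∈ P ∩ ℤ² and nonnegative integers i, j, k with i + j + k = h such that w = i·a + j·b + k·c. -/
open MeasureTheory Pointwise

/-!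
Write `w / h` as a convex combination of at most three affinely independent lattice points
of `P` (Carathéodory) and pad them with lattice points of weight zero to a nondegenerate lattice
triangle `V`, so that `w = ∑ lᵢ • Vᵢ` with `lᵢ ≥ 0` and `∑ lᵢ = h`. If every `lᵢ` is an integer
we are done. Otherwise `w - ∑ ⌊lᵢ⌋ • Vᵢ = ∑ fract lᵢ • Vᵢ` is a lattice point whose weights sum
to `1` or `2`; it, or its reflection `∑ Vᵢ - ∑ fract lᵢ • Vᵢ`, is a lattice point
`q = ∑ μᵢ • Vᵢ` of the triangle with every `μᵢ < 1`. Replacing a suitable vertex `Vᵢ` by `q`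
keeps `w` in `h` times the triangle and multiplies its determinant by `μᵢ ∈ (0, 1)`, so the
argument terminates by induction on the determinant.
-/

open Finset Function

theorem Convex.sumset_subset_dilate {n h : ℕ} {X : Set (Fin n → ℝ)} (hX : Convex ℝ X) (hh : 0 < h) :
    sumset n h X ⊆ dilate n h X := by
  rintro _ ⟨f, hf, rfl⟩
  refine ⟨(h : ℝ)⁻¹ • ∑ i, f i, ?_, by rw [smul_inv_smul₀ (by positivity)]⟩
  rw [smul_sum]
  exact hX.sum_mem (fun _ _ => by positivity) (by simp; field_simp) (fun i _ => hf i)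

theorem exists_sum_smul_update_eq {ι 𝕜 E : Type*} [Fintype ι] [DecidableEq ι] [Field 𝕜]
    [LinearOrder 𝕜] [IsStrictOrderedRing 𝕜] [AddCommGroup E] [Module 𝕜 E] (V : ι → E)
    {l μ : ι → 𝕜} (hl : 0 ≤ l) (hμ : 0 ≤ μ) (hμ1 : ∑ i, μ i = 1) :
    ∃ i, 0 < μ i ∧ ∃ l' : ι → 𝕜, 0 ≤ l' ∧ (∀ j ≠ i, l' j ≤ l j) ∧ ∑ j, l' j = ∑ j, l j ∧
      ∑ j, l' j • update V i (∑ k, μ k • V k) j = ∑ j, l j • V j := by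
  obtain ⟨i, hi, hmin⟩ := exists_min_image {j | 0 < μ j} (fun j => l j / μ j) <| by
    obtain ⟨j, -, hj⟩ := exists_ne_zero_of_sum_ne_zero (hμ1.trans_ne one_ne_zero)
    exact ⟨j, by simpa using (hμ j).lt_of_ne' hj⟩
  rw [mem_filter_univ] at hi
  -- `θ` is the largest scalar with `θ • μ ≤ l`; the new weights are `l - θ • μ` off `i`, `θ` at `i`
  set θ := l i / μ i
  have hθ : 0 ≤ θ := div_nonneg (hl i) hi.le
  have hθμ : ∀ j, θ * μ j ≤ l j := fun j => by
    rcases (hμ j).lt_or_eq with hj | hj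
    · exact (le_div_iff₀ hj).1 (hmin j (by simpa using hj))
    · simpa [← hj] using hl j
  have hi0 : l i - θ * μ i = 0 := by simp [θ, hi.ne']
  refine ⟨i, hi, update (fun j => l j - θ * μ j) i θ, fun j => ?_, fun j hj => ?_, ?_, ?_⟩
  · rcases eq_or_ne j i with rfl | hj
    · simpa using hθ
    · simpa [hj] using hθμ j
  · simpa [hj] using mul_nonneg hθ (hμ j)
  · rw [sum_update_of_mem (mem_univ i), sdiff_singleton_eq_erase,
      sum_erase (f := fun j => l j - θ * μ j) _ hi0]
    simp [sum_sub_distrib, ← mul_sum, hμ1]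
  · have hterm : ∀ j, update (fun j => l j - θ * μ j) i θ j • update V i (∑ k, μ k • V k) j =
        update (fun j => (l j - θ * μ j) • V j) i (θ • ∑ k, μ k • V k) j := fun j => by
      rcases eq_or_ne j i with rfl | hj
      · simp
      · simp [hj]
    simp_rw [hterm]
    rw [sum_update_of_mem (mem_univ i), sdiff_singleton_eq_erase,
      sum_erase (f := fun j => (l j - θ * μ j) • V j) _ (by simp [hi0])]
    simp [sub_smul, sum_sub_distrib, mul_smul, ← smul_sum]

def latticeAddSubgroup (n : ℕ) : AddSubgroup (Fin n → ℝ) where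
  carrier := latticePts n
  add_mem' {x y} hx hy i := by
    obtain ⟨a, ha⟩ := hx i
    obtain ⟨b, hb⟩ := hy i
    exact ⟨a + b, by simp [ha, hb]⟩
  zero_mem' _ := ⟨0, by simp⟩
  neg_mem' {x} hx i := by
    obtain ⟨a, ha⟩ := hx i
    exact ⟨-a, by simp [ha]⟩

theorem single_mem_latticePts {n : ℕ} (i : Fin n) : Pi.single i (1 : ℝ) ∈ latticePts n :=
  fun j => ⟨(Pi.single i 1 : Fin n → ℤ) j, by simp [Pi.single_apply, apply_ite (Int.cast : ℤ → ℝ)]⟩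

def cross {R : Type*} [CommRing R] (u v : Fin 2 → R) : R := u 0 * v 1 - u 1 * v 0

def triDet {R : Type*} [CommRing R] (V : Fin 3 → Fin 2 → R) : R := cross (V 1 - V 0) (V 2 - V 0)

theorem triDet_update_sum {R : Type*} [CommRing R] (V : Fin 3 → Fin 2 → R) {μ : Fin 3 → R}
    (hμ : ∑ i, μ i = 1) (i : Fin 3) :
    triDet (update V i (∑ j, μ j • V j)) = μ i * triDet V := by
  have hμ0 : μ 0 = 1 - μ 1 - μ 2 := by rw [Fin.sum_univ_three] at hμ; linear_combination hμ
  fin_cases i <;> simp [triDet, cross, Fin.sum_univ_three, update, hμ0] <;> ring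

theorem exists_int_triDet_eq {V : Fin 3 → Fin 2 → ℝ} (hV : ∀ i, V i ∈ latticePts 2) :
    ∃ z : ℤ, triDet V = z := by
  choose a ha using hV
  exact ⟨triDet a, by simp [triDet, cross, ha]⟩

theorem AffineIndependent.triDet_ne_zero {V : Fin 3 → Fin 2 → ℝ} (hV : AffineIndependent ℝ V) :
    triDet V ≠ 0 := by
  intro h0
  have hV10 : ∀ k, V 1 k = V 0 k := fun k => by
    -- `(V 2 - V 0) k • (V 1 - V 0) - (V 1 - V 0) k • (V 2 - V 0)` vanishes since `triDet V = 0`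
    have := hV.eq_zero_of_sum_eq_zero (s := univ)
      (w := ![(V 1 - V 0) k - (V 2 - V 0) k, (V 2 - V 0) k, -(V 1 - V 0) k])
      (by simp [Fin.sum_univ_three])
      (by
        ext j
        fin_cases k <;> fin_cases j <;> simp [Fin.sum_univ_three, triDet, cross] at h0 ⊢ <;>
          linarith)
      2 (mem_univ _)
    simp at this
    linarith
  exact hV.injective.ne (by decide : (1 : Fin 3) ≠ 0) (funext hV10)

theorem exists_triDet_add_single_ne_zero {A B : Fin 2 → ℝ} (hAB : A ≠ B) :
    ∃ k : Fin 2, triDet ![A, B, A + Pi.single k 1] ≠ 0 := by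
  by_contra! h
  have h0 := h 0
  have h1 := h 1
  simp [triDet, cross] at h0 h1
  exact hAB (funext fun k => by fin_cases k <;> simp <;> linarith)

theorem exists_lattice_triangle_of_affineIndependent {m : ℕ} (hm : m ≤ 3) {z : Fin m → Fin 2 → ℝ}
    (hz : AffineIndependent ℝ z) (hzL : ∀ i, z i ∈ latticePts 2) {w : Fin m → ℝ} (hw : 0 ≤ w)
    (hw1 : ∑ i, w i = 1) :
    ∃ (V : Fin 3 → Fin 2 → ℝ) (l : Fin 3 → ℝ), (∀ i, V i ∈ latticePts 2) ∧ triDet V ≠ 0 ∧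
      0 ≤ l ∧ ∑ i, l i = 1 ∧ (∀ i, l i ≠ 0 → V i ∈ Set.range z) ∧
      ∑ i, l i • V i = ∑ i, w i • z i := by
  have hsingle (i k) : z i + Pi.single k 1 ∈ latticePts 2 :=
    (latticeAddSubgroup 2).add_mem (hzL i) (single_mem_latticePts k)
  interval_cases m
  · simp at hw1
  · refine ⟨![z 0, z 0 + Pi.single 0 1, z 0 + Pi.single 1 1], ![1, 0, 0], ?_, ?_, ?_, ?_, ?_, ?_⟩
    · intro i; fin_cases i <;> simp [hzL, hsingle]
    · simp [triDet, cross]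
    · intro i; fin_cases i <;> simp
    · simp [Fin.sum_univ_three]
    · intro i hi; fin_cases i <;> simp at hi ⊢
    · simp_all [Fin.sum_univ_three]
  · obtain ⟨k, hk⟩ :=
      exists_triDet_add_single_ne_zero (hz.injective.ne (by decide : (0 : Fin 2) ≠ 1))
    refine ⟨![z 0, z 1, z 0 + Pi.single k 1], ![w 0, w 1, 0], ?_, hk, ?_, ?_, ?_, ?_⟩
    · intro i; fin_cases i <;> simp [hzL, hsingle]
    · intro i; fin_cases i <;> simp <;> exact hw _
    · simpa [Fin.sum_univ_three] using hw1
    · intro i hi; fin_cases i <;> simp at hi ⊢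
    · simp [Fin.sum_univ_three]
  · exact ⟨z, w, hzL, hz.triDet_ne_zero, hw, hw1, fun i _ => ⟨i, rfl⟩, rfl⟩

theorem exists_lattice_triangle_of_mem_convexHull {S : Set (Fin 2 → ℝ)} (hS : S ⊆ latticePts 2)
    {x : Fin 2 → ℝ} (hx : x ∈ convexHull ℝ S) :
    ∃ (V : Fin 3 → Fin 2 → ℝ) (l : Fin 3 → ℝ), (∀ i, V i ∈ latticePts 2) ∧ triDet V ≠ 0 ∧
      0 ≤ l ∧ ∑ i, l i = 1 ∧ (∀ i, l i ≠ 0 → V i ∈ S) ∧ ∑ i, l i • V i = x := by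
  obtain ⟨ι, _, z, w, hzS, hz, hw, hw1, rfl⟩ := eq_pos_convex_span_of_mem_convexHull hx
  have hcard : Fintype.card ι ≤ 3 := by
    have := hz.card_le_finrank_succ
    have := Submodule.finrank_le (vectorSpan ℝ (Set.range z))
    simp only [Module.finrank_fin_fun] at this
    omega
  let e := (Fintype.equivFin ι).symm
  obtain ⟨V, l, hVL, hV, hl, hl1, hlz, hlw⟩ := exists_lattice_triangle_of_affineIndependent hcard
    (hz.comp_embedding e.toEmbedding) (fun i => hS (hzS ⟨_, rfl⟩)) (w := w ∘ e)
    (fun i => (hw _).le) (by rw [← hw1]; exact e.sum_comp w)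
  refine ⟨V, l, hVL, hV, hl, hl1, fun i hi => ?_, hlw.trans (e.sum_comp fun i => w i • z i)⟩
  obtain ⟨j, hj⟩ := hlz i hi
  exact hj ▸ hzS ⟨_, rfl⟩

theorem exists_lattice_point_of_fract_ne_zero {V : Fin 3 → Fin 2 → ℝ}
    (hVL : ∀ i, V i ∈ latticePts 2) {l : Fin 3 → ℝ} {h : ℤ} (hl1 : ∑ i, l i = h)
    (hW : ∑ i, l i • V i ∈ latticePts 2) (hfract : ∃ i, Int.fract (l i) ≠ 0) :
    ∃ μ : Fin 3 → ℝ, 0 ≤ μ ∧ ∑ i, μ i = 1 ∧ (∀ i, μ i ≠ 0 → l i ≠ 0 ∧ μ i < 1) ∧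
      ∑ i, μ i • V i ∈ latticePts 2 := by
  have hfractV : ∑ i, Int.fract (l i) • V i ∈ latticePts 2 := by
    have : ∑ i, Int.fract (l i) • V i = ∑ i, l i • V i - ∑ i, ⌊l i⌋ • V i := by
      simp only [← Int.self_sub_floor, sub_smul, sum_sub_distrib, Int.cast_smul_eq_zsmul]
    rw [this]
    exact (latticeAddSubgroup 2).sub_mem hW (sum_mem fun i _ => zsmul_mem (hVL i) _)
  obtain ⟨k, hk⟩ : ∃ k : ℤ, ∑ i, Int.fract (l i) = k :=
    ⟨h - ∑ i, ⌊l i⌋, by simp only [← Int.self_sub_floor, sum_sub_distrib, hl1]; push_cast; ring⟩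
  have hf0 := fun i => Int.fract_nonneg (l i)
  have hf1 := fun i => Int.fract_lt_one (l i)
  have hl0 : ∀ i, Int.fract (l i) ≠ 0 → l i ≠ 0 := fun i hi h0 => hi (by simp [h0])
  rw [Fin.sum_univ_three] at hk
  have hk0 : 0 < k := by
    obtain ⟨i, hi⟩ := hfract
    have := (hf0 i).lt_of_ne' hi
    have : (0 : ℝ) < k := by fin_cases i <;> simp at this <;> linarith [hf0 0, hf0 1, hf0 2]
    exact_mod_cast this
  have hk3 : k < 3 := by
    have : (k : ℝ) < 3 := by linarith [hf1 0, hf1 1, hf1 2]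
    exact_mod_cast this
  obtain rfl | rfl : k = 1 ∨ k = 2 := by omega
  · refine ⟨fun i => Int.fract (l i), hf0, ?_, fun i hi => ⟨hl0 i hi, hf1 i⟩, hfractV⟩
    rw [Fin.sum_univ_three]
    exact_mod_cast hk
  · -- reflect to `∑ V i - ∑ fract (l i) • V i`; as the fractional parts sum to `2`, all are `> 0`
    have hpos : ∀ i, 0 < Int.fract (l i) := by
      intro i
      fin_cases i <;> simp <;> push_cast at hk <;> linarith [hf1 0, hf1 1, hf1 2]
    refine ⟨fun i => 1 - Int.fract (l i), fun i => sub_nonneg.2 (hf1 i).le, ?_,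
      fun i _ => ⟨hl0 i (hpos i).ne', by linarith [hpos i]⟩, ?_⟩
    · simp only [Fin.sum_univ_three]
      push_cast at hk
      linarith
    · have : ∑ i, (1 - Int.fract (l i)) • V i = ∑ i, V i - ∑ i, Int.fract (l i) • V i := by
        simp [sub_smul, sum_sub_distrib]
      rw [this]
      exact (latticeAddSubgroup 2).sub_mem (sum_mem fun i _ => hVL i) hfractV

def HasThreePointRep (P : Set (Fin 2 → ℝ)) (h : ℕ) (w : Fin 2 → ℝ) : Prop :=
  ∃ a b c : Fin 2 → ℝ, a ∈ P ∩ latticePts 2 ∧ b ∈ P ∩ latticePts 2 ∧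
    c ∈ P ∩ latticePts 2 ∧ ∃ i j k : ℕ, i + j + k = h ∧
      w = (i : ℝ) • a + (j : ℝ) • b + (k : ℝ) • c

theorem HasThreePointRep.of_nat_coeff {P : Set (Fin 2 → ℝ)} {h : ℕ} (hh : 0 < h)
    {V : Fin 3 → Fin 2 → ℝ} (hVL : ∀ i, V i ∈ latticePts 2) {k : Fin 3 → ℕ}
    (hk : ∑ i, k i = h) (hkP : ∀ i, k i ≠ 0 → V i ∈ P) :
    HasThreePointRep P h (∑ i, (k i : ℝ) • V i) := by
  obtain ⟨i₀, hi₀⟩ : ∃ i, k i ≠ 0 := by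
    by_contra! hk0
    simp [hk0] at hk
    omega
  -- vertices with coefficient zero may lie outside `P`; move them to `V i₀`
  let V' i := if k i = 0 then V i₀ else V i
  have hV' : ∀ i, V' i ∈ P ∩ latticePts 2 := fun i => by
    by_cases hi : k i = 0 <;> simp [V', hi, hkP, hVL, hi₀]
  have hterm : ∀ i, (k i : ℝ) • V i = (k i : ℝ) • V' i := fun i => by
    by_cases hi : k i = 0 <;> simp [V', hi]
  refine ⟨V' 0, V' 1, V' 2, hV' 0, hV' 1, hV' 2, k 0, k 1, k 2, ?_, ?_⟩
  · rwa [Fin.sum_univ_three] at hk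
  · rw [Fin.sum_univ_three, hterm 0, hterm 1, hterm 2]

theorem HasThreePointRep.of_triangle {P : Set (Fin 2 → ℝ)} (hP : Convex ℝ P) {h : ℕ}
    (hh : 0 < h) {V : Fin 3 → Fin 2 → ℝ} (hVL : ∀ i, V i ∈ latticePts 2) (hV : triDet V ≠ 0)
    {l : Fin 3 → ℝ} (hl : 0 ≤ l) (hl1 : ∑ i, l i = h) (hlP : ∀ i, l i ≠ 0 → V i ∈ P)
    (hW : ∑ i, l i • V i ∈ latticePts 2) : HasThreePointRep P h (∑ i, l i • V i) := by
  obtain ⟨z, hz⟩ := exists_int_triDet_eq hVL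
  obtain ⟨N, hN⟩ : ∃ N, z.natAbs = N := ⟨_, rfl⟩
  induction N using Nat.strong_induction_on generalizing V l z with
  | _ N IH =>
  by_cases hint : ∀ i, Int.fract (l i) = 0
  · obtain ⟨k, rfl⟩ : ∃ k : Fin 3 → ℕ, l = fun i => (k i : ℝ) :=
      ⟨fun i => ⌊l i⌋₊, funext fun i => by
        rw [natCast_floor_eq_intCast_floor (hl i), ← sub_eq_zero, Int.self_sub_floor, hint i]⟩
    simp only at hl1
    exact HasThreePointRep.of_nat_coeff hh hVL (by exact_mod_cast hl1) fun i hi =>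
      hlP i (by simpa using hi)
  push Not at hint
  obtain ⟨μ, hμ, hμ1, hμl, hq⟩ := exists_lattice_point_of_fract_ne_zero hVL (h := h)
    (by exact_mod_cast hl1) hW hint
  obtain ⟨i, hi, l', hl', hl'l, hl'1, hl'W⟩ := exists_sum_smul_update_eq V hl hμ hμ1
  set V' := update V i (∑ j, μ j • V j)
  have hV'L : ∀ j, V' j ∈ latticePts 2 := fun j => by
    rcases eq_or_ne j i with rfl | hj
    · simpa [V'] using hq
    · simpa [V', hj] using hVL j
  obtain ⟨z', hz'⟩ := exists_int_triDet_eq hV'L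
  have hdet : triDet V' = μ i * triDet V := triDet_update_sum V hμ1 i
  rw [← hl'W]
  refine IH z'.natAbs ?_ hV'L ?_ hl' (hl'1.trans hl1) (fun j hj => ?_) (hl'W ▸ hW) z' hz' rfl
  · have : |(z' : ℝ)| < |(z : ℝ)| := by
      rw [← hz, ← hz', hdet, abs_mul, abs_of_pos hi]
      exact mul_lt_of_lt_one_left (abs_pos.2 hV) (hμl i hi.ne').2
    rw [← hN]
    zify
    exact_mod_cast this
  · rw [hdet]
    exact mul_ne_zero hi.ne' hV
  · rcases eq_or_ne j i with rfl | hji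
    · simp only [V', update_self]
      simpa only [finsum_eq_sum_of_fintype] using hP.finsum_mem hμ
        (by rwa [finsum_eq_sum_of_fintype]) fun j hj => hlP j (hμl j hj).1
    · simp only [V', update_of_ne hji]
      exact hlP j fun h0 => hj (le_antisymm (h0 ▸ hl'l j hji) (hl' j))

theorem lattice_point_in_sumset_rep (P : Set (Fin 2 → ℝ))
    (hP : IsLatticePolytope 2 P) (h : ℕ) (hh : 0 < h)
    (w : Fin 2 → ℝ) (hw : w ∈ sumset 2 h P) (hwl : w ∈ latticePts 2) :
    ∃ a b c : Fin 2 → ℝ, a ∈ P ∩ latticePts 2 ∧ b ∈ P ∩ latticePts 2 ∧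
      c ∈ P ∩ latticePts 2 ∧ ∃ i j k : ℕ, i + j + k = h ∧
        w = (i : ℝ) • a + (j : ℝ) • b + (k : ℝ) • c := by
  obtain ⟨S, -, hSL, rfl⟩ := hP
  have hconv := convex_convexHull ℝ (S : Set (Fin 2 → ℝ))
  obtain ⟨x, hx, rfl⟩ := hconv.sumset_subset_dilate hh hw
  obtain ⟨V, l, hVL, hV, hl, hl1, hlS, rfl⟩ := exists_lattice_triangle_of_mem_convexHull hSL hx
  have hsmul : (h : ℝ) • ∑ i, l i • V i = ∑ i, (h * l i) • V i := by simp [smul_sum, mul_smul]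
  rw [hsmul] at hwl ⊢
  exact HasThreePointRep.of_triangle hconv hh hVL hV (fun i => mul_nonneg h.cast_nonneg (hl i))
    (by rw [← mul_sum, hl1, mul_one])
    (fun i hi => subset_convexHull ℝ _ (hlS i (right_ne_zero_of_mul hi))) hwl
end
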